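/- arXiv:1402.6976 — 4 statements merged into one kernel-verified Lean document; each statement's English description precedes it below -/
import Mathlib

section
/- Christoffel–Darboux formula: let (P_n)_{n∈ℕ} be real polynomials satisfying the three-term recurrence t P_n(t) = a_n P_{n+1}(t) + b_n P_n(t) + a_{n−1} P_{n−1}(t) for n ≥ 1 and t P_0(t) = a_0 P_1(t) + b_0 P_0(t), with a_n > 0 and b_n ∈ ℝ. Then for all t, z ∈ ℝ and all n ∈ ℕ: (t − z) Σ_{k=0}^{n} P_k(t) P_k(z) = a_n (P_{n+1}(t) P_n(z) − P_n(t) P_{n+1}(z)). -/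
/-!
Multiplying the recurrence at `t` by `P_n(z)` and the recurrence at `z` by `P_n(t)` and
subtracting, the `b_n` terms cancel and what is left says that the Casoratian
`a_n (P_{n+1}(t) P_n(z) - P_n(t) P_{n+1}(z))` grows by exactly `(t - z) P_n(t) P_n(z)` from
`n - 1` to `n`; summing telescopes.
-/

section JacobiRecurrence

variable {R : Type*} [CommRing R]

/-- `u` is a formal eigenvector, for the eigenvalue `t`, of the Jacobi matrix with diagonal `b`
and off-diagonal `a`. -/
structure JacobiRecurrence (a b : ℕ → R) (t : R) (u : ℕ → R) : Prop where
  zero : t * u 0 = a 0 * u 1 + b 0 * u 0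
  succ : ∀ n, t * u (n + 1) = a (n + 1) * u (n + 2) + b (n + 1) * u (n + 1) + a n * u n

def casoratian (a u v : ℕ → R) (n : ℕ) : R :=
  a n * (u (n + 1) * v n - u n * v (n + 1))

variable {a b u v : ℕ → R} {t z : R}

theorem JacobiRecurrence.casoratian_zero (hu : JacobiRecurrence a b t u)
    (hv : JacobiRecurrence a b z v) :
    casoratian a u v 0 = (t - z) * (u 0 * v 0) := by
  unfold casoratian
  linear_combination u 0 * hv.zero - v 0 * hu.zero

theorem JacobiRecurrence.casoratian_succ (hu : JacobiRecurrence a b t u)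
    (hv : JacobiRecurrence a b z v) (n : ℕ) :
    casoratian a u v (n + 1) = casoratian a u v n + (t - z) * (u (n + 1) * v (n + 1)) := by
  unfold casoratian
  linear_combination u (n + 1) * hv.succ n - v (n + 1) * hu.succ n

theorem JacobiRecurrence.sub_mul_sum_eq_casoratian (hu : JacobiRecurrence a b t u)
    (hv : JacobiRecurrence a b z v) (n : ℕ) :
    (t - z) * ∑ k ∈ Finset.range (n + 1), u k * v k = casoratian a u v n := by
  induction n with
  | zero => rw [Finset.sum_range_one, hu.casoratian_zero hv]
  | succ n ih => rw [Finset.sum_range_succ, mul_add, ih, hu.casoratian_succ hv]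

end JacobiRecurrence

theorem christoffel_darboux_general
    (a b : ℕ → ℝ) (P : ℕ → Polynomial ℝ)
    (hrec0 : ∀ t : ℝ, t * (P 0).eval t = a 0 * (P 1).eval t + b 0 * (P 0).eval t)
    (hrec : ∀ n : ℕ, 1 ≤ n → ∀ t : ℝ,
      t * (P n).eval t
        = a n * (P (n + 1)).eval t + b n * (P n).eval t + a (n - 1) * (P (n - 1)).eval t) :
    ∀ (t z : ℝ) (n : ℕ),
      (t - z) * ∑ k ∈ Finset.range (n + 1), (P k).eval t * (P k).eval z
        = a n * ((P (n + 1)).eval t * (P n).eval z - (P n).eval t * (P (n + 1)).eval z) := by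
  have jacobi (t : ℝ) : JacobiRecurrence a b t (fun k ↦ (P k).eval t) :=
    ⟨hrec0 t, fun n ↦ hrec (n + 1) n.succ_pos t⟩
  intro t z n
  exact (jacobi t).sub_mul_sum_eq_casoratian (jacobi z) n

/-- Christoffel–Darboux formula: for polynomials satisfying the three-term
recurrence with `a n > 0`, one has
`(t − z) Σ_{k=0}^{n} P_k(t) P_k(z) = a_n (P_{n+1}(t) P_n(z) − P_n(t) P_{n+1}(z))`. -/
theorem christoffel_darboux
    (a b : ℕ → ℝ) (ha : ∀ n, 0 < a n) (P : ℕ → Polynomial ℝ)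
    (hrec0 : ∀ t : ℝ, t * (P 0).eval t = a 0 * (P 1).eval t + b 0 * (P 0).eval t)
    (hrec : ∀ n : ℕ, 1 ≤ n → ∀ t : ℝ,
      t * (P n).eval t
        = a n * (P (n + 1)).eval t + b n * (P n).eval t + a (n - 1) * (P (n - 1)).eval t) :
    ∀ (t z : ℝ) (n : ℕ),
      (t - z) * ∑ k ∈ Finset.range (n + 1), (P k).eval t * (P k).eval z
        = a n * ((P (n + 1)).eval t * (P n).eval z - (P n).eval t * (P (n + 1)).eval z) :=
  christoffel_darboux_general a b P hrec0 hrec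
end

section
/- Let J^N ∈ M_N(ℝ) be the symmetric tridiagonal matrix with diagonal entries (J^N)_{mm} = b_m (0 ≤ m ≤ N−1) and sub/superdiagonal entries (J^N)_{m,m+1} = (J^N)_{m+1,m} = a_m (0 ≤ m ≤ N−2), where a_m > 0 and b_m ∈ ℝ, and let (P_n) be the associated orthonormal-recurrence polynomials with P_0 = 1. Then a real number t₀ is an eigenvalue of J^N if and only if P_N(t₀) = 0. -/
/-!
On the vector `(P_0(t), …, P_{N-1}(t))` the truncated matrix `J^N` acts as multiplication by `t`
except in the last coordinate, whose defect is `a_{N-1} P_N(t)`. Conversely, since every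
`a_m ≠ 0`, the rows of `J^N v = t v` determine `v` from `v_0` via the same recurrence, so every
eigenvector is a multiple of that vector, and the last row then forces `P_N(t) = 0`.
-/

open Finset Matrix

/-- Row `m` of the semi-infinite Jacobi matrix applied to `w`. -/
def jacobiOp (a b w : ℕ → ℝ) (m : ℕ) : ℝ :=
  a m * w (m + 1) + b m * w m + if m = 0 then 0 else a (m - 1) * w (m - 1)

theorem eq_mul_of_jacobiOp_eq {a b u w : ℕ → ℝ} {t : ℝ} {n : ℕ} (ha : ∀ m < n, a m ≠ 0)
    (hu : ∀ m < n, jacobiOp a b u m = t * u m) (hw : ∀ m < n, jacobiOp a b w m = t * w m)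
    (hu0 : u 0 = 1) : ∀ k ≤ n, w k = w 0 * u k := by
  intro k
  induction k using Nat.strong_induction_on with
  | _ k ih =>
    intro hk
    rcases k with _ | j
    · rw [hu0, mul_one]
    · have hj : j < n := by omega
      have hwj := hw j hj
      have huj := hu j hj
      have ihj := ih j (by omega) hj.le
      refine mul_left_cancel₀ (ha j hj) ?_
      unfold jacobiOp at hwj huj
      split_ifs at hwj huj with hj0
      · linear_combination hwj - w 0 * huj - (b j - t) * ihj
      · have ihj' := ih (j - 1) (by omega) (by omega)
        linear_combination hwj - w 0 * huj - (b j - t) * ihj - a (j - 1) * ihj'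

section Tridiagonal

variable {N : ℕ} {a b : ℕ → ℝ} {J : Matrix (Fin N) (Fin N) ℝ}

theorem mulVec_apply_eq_jacobiOp_sub
    (hJ : ∀ m l : Fin N, J m l =
      if (m : ℕ) = l then b m
      else if (m : ℕ) + 1 = l then a m
      else if (l : ℕ) + 1 = m then a l
      else 0)
    (w : ℕ → ℝ) (m : Fin N) :
    (J *ᵥ fun i => w i) m = jacobiOp a b w m - if (m : ℕ) + 1 = N then a m * w N else 0 := by
  have hterm : ∀ l : ℕ, (if (m : ℕ) = l then b m
      else if (m : ℕ) + 1 = l then a m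
      else if l + 1 = m then a l
      else 0) * w l =
      (if l = m then b m * w m else 0) + (if l = m + 1 then a m * w (m + 1) else 0)
        + if l + 1 = m then a l * w l else 0 := by
    intro l
    split_ifs <;> first | (exfalso; omega) | subst_vars; ring
  have hlow : ∑ l ∈ range N, (if l + 1 = (m : ℕ) then a l * w l else 0) =
      if (m : ℕ) = 0 then 0 else a (m - 1) * w (m - 1) := by
    obtain ⟨m, hm⟩ := m
    cases m with
    | zero => simp
    | succ k => simp [show k < N by omega]
  simp only [mulVec, dotProduct, hJ]
  rw [Fin.sum_univ_eq_sum_range (fun l => (if (m : ℕ) = l then b m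
      else if (m : ℕ) + 1 = l then a m
      else if l + 1 = m then a l
      else 0) * w l), sum_congr rfl fun l _ => hterm l, sum_add_distrib, sum_add_distrib, hlow]
  simp only [sum_ite_eq', mem_range, m.isLt, if_true, jacobiOp]
  rcases eq_or_ne ((m : ℕ) + 1) N with hN | hN
  · simp only [hN, lt_irrefl, if_true, if_false, ← congrArg w hN]
    ring
  · simp only [hN, show (m : ℕ) + 1 < N by omega, if_true, if_false]
    ring

theorem mulVec_eq_smul_iff_jacobiOp
    (hJ : ∀ m l : Fin N, J m l =
      if (m : ℕ) = l then b m
      else if (m : ℕ) + 1 = l then a m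
      else if (l : ℕ) + 1 = m then a l
      else 0)
    {w : ℕ → ℝ} (hwN : w N = 0) (t : ℝ) :
    (J *ᵥ fun i => w i) = (t • fun i : Fin N => w i) ↔
      ∀ m < N, jacobiOp a b w m = t * w m := by
  simp only [funext_iff, mulVec_apply_eq_jacobiOp_sub hJ, hwN, mul_zero, ite_self, sub_zero,
    Pi.smul_apply, smul_eq_mul]
  exact ⟨fun h m hm => h ⟨m, hm⟩, fun h m => h m m.isLt⟩

end Tridiagonal

theorem eigenvalue_truncated_jacobi_iff_root_general
    (a b : ℕ → ℝ) (ha : ∀ n, 0 < a n) (P : ℕ → Polynomial ℝ)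
    (hP0 : P 0 = 1)
    (hrec0 : ∀ t : ℝ, t * (P 0).eval t = a 0 * (P 1).eval t + b 0 * (P 0).eval t)
    (hrec : ∀ n : ℕ, 1 ≤ n → ∀ t : ℝ,
      t * (P n).eval t
        = a n * (P (n + 1)).eval t + b n * (P n).eval t + a (n - 1) * (P (n - 1)).eval t)
    (N : ℕ)
    (JN : Matrix (Fin N) (Fin N) ℝ)
    (hJN : ∀ m l : Fin N, JN m l =
      if (m : ℕ) = l then b m
      else if (m : ℕ) + 1 = l then a m
      else if (l : ℕ) + 1 = m then a l
      else 0)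
    (t₀ : ℝ) :
    (∃ v : Fin N → ℝ, v ≠ 0 ∧ JN.mulVec v = t₀ • v) ↔ (P N).eval t₀ = 0 := by
  set p : ℕ → ℝ := fun n => (P n).eval t₀
  have hp0 : p 0 = 1 := by simp [p, hP0]
  have hp : ∀ m, jacobiOp a b p m = t₀ * p m := by
    rintro (_ | m)
    · simp [jacobiOp, p, hrec0]
    · simp [jacobiOp, p, hrec (m + 1) (by omega)]
  constructor
  · rintro ⟨v, hv, hJv⟩
    set w : ℕ → ℝ := fun n => if h : n < N then v ⟨n, h⟩ else 0
    have hvw : v = fun i : Fin N => w i := by simp [w]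
    have hwN : w N = 0 := by simp [w]
    have hw := (mulVec_eq_smul_iff_jacobiOp hJN hwN t₀).mp (hvw ▸ hJv)
    have hwp := eq_mul_of_jacobiOp_eq (fun m _ => (ha m).ne') (fun m _ => hp m) hw hp0
    have hw0 : w 0 ≠ 0 := fun h0 => hv (hvw ▸ funext fun i => by simp [hwp i i.isLt.le, h0])
    exact (mul_eq_zero.mp (hwN ▸ hwp N le_rfl).symm).resolve_left hw0
  · intro hroot
    have hN : N ≠ 0 := by
      rintro rfl
      simp [hP0] at hroot
    refine ⟨fun i => p i, fun h => ?_,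
      (mulVec_eq_smul_iff_jacobiOp hJN hroot t₀).mpr fun m _ => hp m⟩
    simpa [hp0] using congrFun h ⟨0, Nat.pos_of_ne_zero hN⟩

/-- `t₀` is an eigenvalue of the `N × N` symmetric tridiagonal truncation `J^N`
(diagonal `b`, sub/superdiagonal `a`) if and only if `t₀` is a zero of the `N`-th orthonormal
recurrence polynomial `P N` (normalized by `P 0 = 1`). -/
theorem eigenvalue_truncated_jacobi_iff_root
    (a b : ℕ → ℝ) (ha : ∀ n, 0 < a n) (P : ℕ → Polynomial ℝ)
    (hP0 : P 0 = 1)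
    (hrec0 : ∀ t : ℝ, t * (P 0).eval t = a 0 * (P 1).eval t + b 0 * (P 0).eval t)
    (hrec : ∀ n : ℕ, 1 ≤ n → ∀ t : ℝ,
      t * (P n).eval t
        = a n * (P (n + 1)).eval t + b n * (P n).eval t + a (n - 1) * (P (n - 1)).eval t)
    (N : ℕ) (hN : 1 ≤ N)
    (JN : Matrix (Fin N) (Fin N) ℝ)
    (hJN : ∀ m l : Fin N, JN m l =
      if (m : ℕ) = l then b m
      else if (m : ℕ) + 1 = l then a m
      else if (l : ℕ) + 1 = m then a l
      else 0)
    (t₀ : ℝ) :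
    (∃ v : Fin N → ℝ, v ≠ 0 ∧ JN.mulVec v = t₀ • v) ↔ (P N).eval t₀ = 0 :=
  eigenvalue_truncated_jacobi_iff_root_general a b ha P hP0 hrec0 hrec N JN hJN t₀
end

section
/- Let (P_n) be the polynomials determined by the three-term recurrence with coefficients a_m > 0, b_m ∈ ℝ and normalization P_0 = 1. Then for every N ≥ 1 the polynomial P_N has exactly N roots, all real and simple (pairwise distinct). Moreover, if the associated Jacobi operator J on ℓ²(ℕ) is bounded, every root of P_N lies in the interval [−‖J‖, ‖J‖]. -/
/-! The recurrence yields the Christoffel–Darboux identity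
`(x - y) ∑_{k ≤ n} u_k v_k = a_n (u_{n+1} v_n - u_n v_{n+1})` for solutions `u` at `x` and `v` at `y`.
If `z` is a complex zero of `P_{n+1}`, take `u_k = P_k(z)` and `v_k = conj u_k`: the right side
vanishes while the sum is `∑ |P_k(z)|² ≥ |P_0|² = 1`, so `z` is real, and `P_{n+1}`, of degree
`n + 1`, has `n + 1` real roots counted with multiplicity. Taking `x = X` and `y = t` for a real
zero `t` shows that `(X - t)² ∣ P_{n+1}` would force `X - t ∣ ∑ P_k P_k(t)`, whose value at `t`
is `∑ P_k(t)² ≥ 1`; so the roots are simple. Finally the truncated vector `x = ∑_{k ≤ n} P_k(t) e_k`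
satisfies `J x = t x + a_n P_n(t) e_{n+1}` with `e_{n+1} ⊥ x`, hence `t ‖x‖² = ⟪x, J x⟫` and
`|t| ≤ ‖J‖`. -/

open MeasureTheory

/-- The canonical orthonormal basis vectors of `ℓ²(ℕ)`. -/
noncomputable def e (m : ℕ) : lp (fun _ : ℕ => ℂ) 2 := lp.single 2 m (1 : ℂ)

open Finset Polynomial
open scoped InnerProductSpace ComplexConjugate

theorem norm_le_opNorm_of_inner_map_self_eq {𝕜 E : Type*} [RCLike 𝕜] [NormedAddCommGroup E]
    [InnerProductSpace 𝕜 E] (T : E →L[𝕜] E) {x : E} (hx : x ≠ 0) {z : 𝕜}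
    (h : ⟪x, T x⟫_𝕜 = z * ⟪x, x⟫_𝕜) : ‖z‖ ≤ ‖T‖ := by
  refine le_of_mul_le_mul_right ?_ (by positivity : 0 < ‖x‖ ^ 2)
  calc ‖z‖ * ‖x‖ ^ 2 = ‖⟪x, T x⟫_𝕜‖ := by
        rw [h, norm_mul, inner_self_eq_norm_sq_to_K, norm_pow, RCLike.norm_ofReal, abs_norm]
    _ ≤ ‖x‖ * ‖T x‖ := norm_inner_le_norm _ _
    _ ≤ ‖x‖ * (‖T‖ * ‖x‖) := by gcongr; exact T.le_opNorm x
    _ = ‖T‖ * ‖x‖ ^ 2 := by ring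

structure IsJacobiSolution {R : Type*} [Semiring R] (a b : ℕ → R) (x : R) (u : ℕ → R) : Prop where
  zero : x * u 0 = a 0 * u 1 + b 0 * u 0
  succ : ∀ n, x * u (n + 1) = a (n + 1) * u (n + 2) + b (n + 1) * u (n + 1) + a n * u n

namespace IsJacobiSolution

section Semiring

variable {R S : Type*} [Semiring R] [Semiring S] {a b : ℕ → R} {x : R} {u : ℕ → R}

theorem map (h : IsJacobiSolution a b x u) (f : R →+* S) :
    IsJacobiSolution (fun n => f (a n)) (fun n => f (b n)) (f x) (fun n => f (u n)) where
  zero := by simpa using congrArg f h.zero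
  succ n := by simpa using congrArg f (h.succ n)

end Semiring

section CommRing

variable {R : Type*} [CommRing R] {a b : ℕ → R} {x y : R} {u v : ℕ → R}

theorem christoffel_darboux (hu : IsJacobiSolution a b x u) (hv : IsJacobiSolution a b y v)
    (n : ℕ) :
    (x - y) * ∑ k ∈ range (n + 1), u k * v k = a n * (u (n + 1) * v n - u n * v (n + 1)) := by
  induction n with
  | zero =>
    rw [zero_add, range_one, sum_singleton]
    linear_combination v 0 * hu.zero - u 0 * hv.zero
  | succ n ih =>
    rw [sum_range_succ]
    linear_combination ih + v (n + 1) * hu.succ n - u (n + 1) * hv.succ n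

end CommRing

section Polynomial

variable {K : Type*} [Field K] {a b : ℕ → K} {P : ℕ → K[X]}

theorem of_eval [Infinite K] (h : ∀ t, IsJacobiSolution a b t fun n => (P n).eval t) :
    IsJacobiSolution (fun n => C (a n)) (fun n => C (b n)) X P where
  zero := funext fun t => by simpa using (h t).zero
  succ n := funext fun t => by simpa using (h t).succ n

theorem natDegree_eq (hP : IsJacobiSolution (fun n => C (a n)) (fun n => C (b n)) X P)
    (hP0 : P 0 = 1) (ha : ∀ n, a n ≠ 0) (n : ℕ) : (P n).natDegree = n := by
  suffices h : ∀ m, (P m).natDegree = m ∧ (P (m + 1)).natDegree = m + 1 from (h n).1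
  intro m
  induction m with
  | zero =>
    have h1 : C (a 0) * P 1 = X - C (b 0) := by
      have h := hP.zero
      rw [hP0] at h
      linear_combination -h
    refine ⟨by rw [hP0, natDegree_one], ?_⟩
    rw [← natDegree_C_mul (ha 0), h1, natDegree_X_sub_C]
  | succ m ih =>
    obtain ⟨hm, hm1⟩ := ih
    refine ⟨hm1, ?_⟩
    have hrec : C (a (m + 1)) * P (m + 2) = (X - C (b (m + 1))) * P (m + 1) - C (a m) * P m := by
      linear_combination -hP.succ m
    have hP1 : P (m + 1) ≠ 0 := fun h => by simp [h] at hm1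
    have hlead : ((X - C (b (m + 1))) * P (m + 1)).natDegree = m + 2 := by
      rw [natDegree_mul (X_sub_C_ne_zero _) hP1, natDegree_X_sub_C, hm1, add_comm]
    have hlow : (C (a m) * P m).natDegree = m := by rw [natDegree_C_mul (ha m), hm]
    rw [← natDegree_C_mul (ha (m + 1)), hrec,
      natDegree_sub_eq_left_of_natDegree_lt (by omega), hlead]

theorem nodup_roots [LinearOrder K] [IsStrictOrderedRing K]
    (hP : IsJacobiSolution (fun n => C (a n)) (fun n => C (b n)) X P) (hP0 : P 0 = 1) (n : ℕ) :
    (P (n + 1)).roots.Nodup := by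
  classical
  refine Multiset.nodup_iff_count_le_one.mpr fun t => ?_
  rw [count_roots]
  by_contra! hmult
  have hne : P (n + 1) ≠ 0 := fun h => by simp [h] at hmult
  have hdvd : (X - C t) ^ 2 ∣ P (n + 1) := (le_rootMultiplicity_iff hne).mp hmult
  have hroot : (P (n + 1)).eval t = 0 :=
    dvd_iff_isRoot.mp ((dvd_pow_self _ two_ne_zero).trans hdvd)
  have ht : IsJacobiSolution (fun n => C (a n)) (fun n => C (b n)) (C t)
      fun k => C ((P k).eval t) := by
    simpa using (hP.map (evalRingHom t)).map C
  have hcd := hP.christoffel_darboux ht n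
  rw [hroot, C_0, mul_zero, sub_zero] at hcd
  have hsum : (X - C t) ∣ ∑ k ∈ range (n + 1), P k * C ((P k).eval t) := by
    rw [← mul_dvd_mul_iff_left (X_sub_C_ne_zero t), ← pow_two, hcd]
    exact (hdvd.mul_right _).mul_left _
  have hzero := dvd_iff_isRoot.mp hsum
  rw [IsRoot.def, eval_finsetSum, sum_range_succ'] at hzero
  simp only [eval_mul, eval_C, hP0, eval_one, mul_one] at hzero
  have hsq : 0 ≤ ∑ k ∈ range n, (P (k + 1)).eval t * (P (k + 1)).eval t :=
    sum_nonneg fun k _ => mul_self_nonneg _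
  linarith

end Polynomial

theorem im_eq_zero {a b : ℕ → ℝ} {z : ℂ} {u : ℕ → ℂ}
    (hu : IsJacobiSolution (fun n => (a n : ℂ)) (fun n => (b n : ℂ)) z u) (h0 : u 0 ≠ 0) {n : ℕ}
    (hn : u (n + 1) = 0) : z.im = 0 := by
  have hconj : IsJacobiSolution (fun n => (a n : ℂ)) (fun n => (b n : ℂ)) (conj z)
      fun k => conj (u k) := by
    simpa using hu.map (starRingEnd ℂ)
  have hcd := hu.christoffel_darboux hconj n
  simp only [hn, map_zero, zero_mul, mul_zero, sub_zero, Complex.mul_conj] at hcd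
  have hpos : 0 < ∑ k ∈ range (n + 1), Complex.normSq (u k) :=
    sum_pos' (fun k _ => Complex.normSq_nonneg _)
      ⟨0, mem_range.mpr n.succ_pos, Complex.normSq_pos.mpr h0⟩
  rw [← Complex.ofReal_sum, mul_eq_zero, sub_eq_zero, Complex.ofReal_eq_zero] at hcd
  exact Complex.conj_eq_iff_im.mp (hcd.resolve_right hpos.ne').symm

theorem card_roots_eq_natDegree {a b : ℕ → ℝ} {P : ℕ → ℝ[X]}
    (hP : IsJacobiSolution (fun n => C (a n)) (fun n => C (b n)) X P) (hP0 : P 0 = 1) (n : ℕ) :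
    (P (n + 1)).roots.card = (P (n + 1)).natDegree := by
  refine splits_iff_card_roots.mp <|
    (IsAlgClosed.splits _).of_splits_map (algebraMap ℝ ℂ) fun z hz => ⟨z.re, Complex.ext rfl ?_⟩
  have hu : IsJacobiSolution (fun n => (a n : ℂ)) (fun n => (b n : ℂ)) z fun k => aeval z (P k) := by
    simpa using hP.map (aeval z).toRingHom
  exact (hu.im_eq_zero (by simp [hP0]) (mem_aroots'.mp hz).2).symm

theorem map_sum_smul {R M F : Type*} [CommRing R] [AddCommGroup M] [Module R M] [FunLike F M M]
    [LinearMapClass F R M M] {a b : ℕ → R} {z : R} {u : ℕ → R} (hu : IsJacobiSolution a b z u)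
    {T : F} {v : ℕ → M} (hT0 : T (v 0) = a 0 • v 1 + b 0 • v 0)
    (hT : ∀ m, T (v (m + 1)) = a (m + 1) • v (m + 2) + b (m + 1) • v (m + 1) + a m • v m)
    (n : ℕ) :
    T (∑ m ∈ range (n + 1), u m • v m) =
      z • ∑ m ∈ range (n + 1), u m • v m + (a n * u n) • v (n + 1) - (a n * u (n + 1)) • v n := by
  induction n with
  | zero =>
    rw [zero_add, range_one, sum_singleton, map_smul, hT0]
    linear_combination (norm := module) (-hu.zero) • v 0
  | succ n ih =>
    rw [sum_range_succ, map_add, map_smul, ih, hT]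
    linear_combination (norm := module) (-hu.succ n) • v (n + 1)

theorem norm_le_opNorm {𝕜 E : Type*} [RCLike 𝕜] [NormedAddCommGroup E] [InnerProductSpace 𝕜 E]
    {a b : ℕ → 𝕜} {z : 𝕜} {u : ℕ → 𝕜} (hu : IsJacobiSolution a b z u) (h0 : u 0 ≠ 0) {n : ℕ}
    (hn : u (n + 1) = 0) {v : ℕ → E} (hv : Orthonormal 𝕜 v) (T : E →L[𝕜] E)
    (hT0 : T (v 0) = a 0 • v 1 + b 0 • v 0)
    (hT : ∀ m, T (v (m + 1)) = a (m + 1) • v (m + 2) + b (m + 1) • v (m + 1) + a m • v m) :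
    ‖z‖ ≤ ‖T‖ := by
  set x := ∑ m ∈ range (n + 1), u m • v m
  have hTx : T x = z • x + (a n * u n) • v (n + 1) := by
    rw [hu.map_sum_smul hT0 hT n, hn, mul_zero, zero_smul, sub_zero]
  have horth : ⟪x, v (n + 1)⟫_𝕜 = 0 := by
    simp only [x, sum_inner, inner_smul_left]
    refine sum_eq_zero fun m hm => ?_
    rw [hv.inner_eq_zero (by rw [mem_range] at hm; omega), mul_zero]
  have hx : x ≠ 0 := by
    intro hx
    have h0x : ⟪v 0, x⟫_𝕜 = u 0 := hv.inner_right_sum u (mem_range.mpr n.succ_pos)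
    rw [hx, inner_zero_right] at h0x
    exact h0 h0x.symm
  refine norm_le_opNorm_of_inner_map_self_eq T hx ?_
  rw [hTx, inner_add_right, inner_smul_right, inner_smul_right, horth, mul_zero, add_zero]

end IsJacobiSolution

theorem orthonormal_e : Orthonormal ℂ e := by
  classical
  rw [orthonormal_iff_ite]
  intro i j
  rw [e, e, lp.inner_single_left, lp.single_apply]
  by_cases h : i = j <;> simp [h]

/-- The `N`-th recurrence polynomial `P N` (with `a n > 0` and `P 0 = 1`) has
exactly `N` roots, all real and simple; moreover, if the associated Jacobi operator `J` on
`ℓ²(ℕ)` is bounded, every root of `P N` lies in `[-‖J‖, ‖J‖]`. -/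
theorem recurrence_polynomial_roots_real_simple_and_bounded
    (a b : ℕ → ℝ) (ha : ∀ n, 0 < a n) (P : ℕ → Polynomial ℝ)
    (hP0 : P 0 = 1)
    (hrec0 : ∀ t : ℝ, t * (P 0).eval t = a 0 * (P 1).eval t + b 0 * (P 0).eval t)
    (hrec : ∀ n : ℕ, 1 ≤ n → ∀ t : ℝ,
      t * (P n).eval t
        = a n * (P (n + 1)).eval t + b n * (P n).eval t + a (n - 1) * (P (n - 1)).eval t)
    (J : lp (fun _ : ℕ => ℂ) 2 →L[ℂ] lp (fun _ : ℕ => ℂ) 2)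
    (hJ0 : J (e 0) = (a 0 : ℂ) • e 1 + (b 0 : ℂ) • e 0)
    (hJ : ∀ m : ℕ, 1 ≤ m →
      J (e m) = (a m : ℂ) • e (m + 1) + (b m : ℂ) • e m + (a (m - 1) : ℂ) • e (m - 1)) :
    ∀ N : ℕ, 1 ≤ N →
      (P N).roots.card = N ∧ (P N).roots.Nodup ∧
        ∀ t ∈ (P N).roots, t ∈ Set.Icc (-‖J‖) ‖J‖ := by
  intro N hN
  obtain ⟨n, rfl⟩ : ∃ n, N = n + 1 := ⟨N - 1, by omega⟩
  have heval (t : ℝ) : IsJacobiSolution a b t fun k => (P k).eval t :=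
    ⟨hrec0 t, fun k => hrec (k + 1) k.succ_pos t⟩
  have hP := IsJacobiSolution.of_eval heval
  refine ⟨(hP.card_roots_eq_natDegree hP0 n).trans (hP.natDegree_eq hP0 (fun k => (ha k).ne') _),
    hP.nodup_roots hP0 n, fun t ht => ?_⟩
  have hu : IsJacobiSolution (fun k => (a k : ℂ)) (fun k => (b k : ℂ)) t
      fun k => (((P k).eval t : ℝ) : ℂ) := by
    simpa using (heval t).map Complex.ofRealHom
  have hbound := hu.norm_le_opNorm (by simp [hP0]) (by simpa using isRoot_of_mem_roots ht)
    orthonormal_e J hJ0 fun m => hJ (m + 1) m.succ_pos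
  rw [Complex.norm_real, Real.norm_eq_abs] at hbound
  exact abs_le.mp hbound
end

section
/- Fix μ² > 0 and define, for m, l ∈ ℕ, P_{ml} := (1/(π μ²)) ∫_{−1}^{1} √((1+x)/(1−x)) U_m(x) U_l(x) dx, where U_n is the n-th Chebyshev polynomial of the second kind. Then P is a (two-sided, entrywise) inverse of the kinetic matrix: for all m, r ∈ ℕ, μ² (2 P_{m r} − P_{m+1, r} − P_{m−1, r}) = δ_{m r} (with the convention P_{−1, r} := 0); equivalently Σ_l G_{ml} P_{lr} = δ_{mr} where G_{ml} = μ²(2δ_{ml} − δ_{m,l+1} − δ_{l,m+1}). -/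
/-!
On `(-1, 1)` the weight factors as `√((1+x)/(1-x)) = (1+x)/√(1-x²)`, so `P_{ml}` is an integral
against the Chebyshev measure `dx/√(1-x²)`, i.e. `∫₀^π (1 + cos θ) U_m(cos θ) U_l(cos θ) dθ` up to
`1/(πμ²)`. The three-term recurrence turns the kinetic combination `2U_m - U_{m+1} - U_{m-1}` into
`(2 - 2x) U_m`, and `(1+x)(2-2x) = 2(1-x²) = 2 sin²θ`, which leaves
`2 ∫₀^π sin((m+1)θ) sin((l+1)θ) dθ = π δ_{ml}`.
-/

open Polynomial.Chebyshev

/-- The matrix elements of the propagator: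
`P_{ml} = (1/(πμ²)) ∫_{−1}^{1} √((1+x)/(1−x)) U_m(x) U_l(x) dx`. -/
noncomputable def propagator (μ2 : ℝ) (m l : ℕ) : ℝ :=
  (1 / (Real.pi * μ2)) * ∫ x in (-1 : ℝ)..1,
    Real.sqrt ((1 + x) / (1 - x)) *
      ((U ℝ (m : ℤ)).eval x * (U ℝ (l : ℤ)).eval x)

open Polynomial Real MeasureTheory

theorem Real.integral_cos_intCast_mul (k : ℤ) :
    ∫ θ in (0 : ℝ)..π, cos (k * θ) = if k = 0 then π else 0 := by
  rcases eq_or_ne k 0 with rfl | hk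
  · simp
  · rw [if_neg hk, intervalIntegral.integral_comp_mul_left _ (Int.cast_ne_zero.2 hk)]
    simp [integral_cos, sin_int_mul_pi]

theorem Real.integral_sin_mul_sin (m r : ℕ) :
    ∫ θ in (0 : ℝ)..π, sin ((m + 1) * θ) * sin ((r + 1) * θ) = if m = r then π / 2 else 0 := by
  have hprod (θ : ℝ) : sin ((m + 1) * θ) * sin ((r + 1) * θ)
      = (cos (((m - r : ℤ) : ℝ) * θ) - cos (((m + r + 2 : ℤ) : ℝ) * θ)) / 2 := by
    rw [show ((m - r : ℤ) : ℝ) * θ = (m + 1) * θ - (r + 1) * θ by push_cast; ring,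
      show ((m + r + 2 : ℤ) : ℝ) * θ = (m + 1) * θ + (r + 1) * θ by push_cast; ring,
      cos_sub, cos_add]
    ring
  have hcos (k : ℤ) : IntervalIntegrable (fun θ : ℝ ↦ cos (k * θ)) volume 0 π :=
    (by fun_prop : Continuous fun θ : ℝ ↦ cos (k * θ)).intervalIntegrable _ _
  simp only [hprod]
  rw [intervalIntegral.integral_div, intervalIntegral.integral_sub (hcos _) (hcos _),
    integral_cos_intCast_mul, integral_cos_intCast_mul, if_neg (by omega : (m + r + 2 : ℤ) ≠ 0)]
  simp [sub_eq_zero, apply_ite (· / (2 : ℝ))]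

theorem Real.sqrt_one_add_div_one_sub (x : ℝ) :
    √((1 + x) / (1 - x)) = (1 + x) * (√(1 - x ^ 2))⁻¹ := by
  rcases lt_or_ge x 1 with h1 | h1
  · rcases lt_or_ge (-1) x with h2 | h2
    · rw [show 1 - x ^ 2 = (1 + x) * (1 - x) by ring, sqrt_mul (by linarith),
        sqrt_div' _ (by linarith)]
      have : 0 < √(1 + x) := sqrt_pos.2 (by linarith)
      field_simp
      rw [sq_sqrt (by linarith)]
    · rw [sqrt_eq_zero_of_nonpos (div_nonpos_of_nonpos_of_nonneg (by linarith) (by linarith)),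
        sqrt_eq_zero_of_nonpos (by nlinarith)]
      simp
  · rw [sqrt_eq_zero_of_nonpos (div_nonpos_of_nonneg_of_nonpos (by linarith) (by linarith)),
      sqrt_eq_zero_of_nonpos (by nlinarith)]
    simp

namespace Polynomial.Chebyshev

theorem two_mul_U_sub_U_add_one_sub_U_sub_one (R : Type*) [CommRing R] (n : ℤ) :
    2 * U R n - U R (n + 1) - U R (n - 1) = (2 - 2 * X) * U R n := by
  rw [U_add_one]
  ring

theorem integral_sqrt_one_add_div_one_sub_mul (f : ℝ → ℝ) :
    ∫ x in (-1 : ℝ)..1, √((1 + x) / (1 - x)) * f x = ∫ x, (1 + x) * f x ∂measureT := by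
  rw [integral_measureT]
  congr 1 with x
  rw [sqrt_one_add_div_one_sub, sqrt_inv]
  ring

theorem integral_one_sub_sq_mul_U_mul_U_measureT (m r : ℕ) :
    ∫ x, (1 - x ^ 2) * ((U ℝ m).eval x * (U ℝ r).eval x) ∂measureT
      = if m = r then π / 2 else 0 := by
  rw [integral_measureT_eq_integral_cos, ← integral_sin_mul_sin]
  congr 1 with θ
  have hm := U_real_cos θ m
  have hr := U_real_cos θ r
  push_cast at hm hr
  rw [← hm, ← hr, ← sin_sq]
  ring

end Polynomial.Chebyshev

/-- `πμ² P_{nl}`, indexed by `n : ℤ` so that `U_{-1} = 0` realises the convention `P_{-1,l} = 0`. -/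
noncomputable def scaledPropagator (n : ℤ) (l : ℕ) : ℝ :=
  ∫ x, (1 + x) * ((U ℝ n).eval x * (U ℝ l).eval x) ∂measureT

theorem propagator_eq_scaledPropagator (μ2 : ℝ) (m l : ℕ) :
    propagator μ2 m l = (π * μ2)⁻¹ * scaledPropagator m l := by
  rw [propagator, integral_sqrt_one_add_div_one_sub_mul, one_div, scaledPropagator]

theorem ite_propagator_pred_eq_scaledPropagator (μ2 : ℝ) (m l : ℕ) :
    (if m = 0 then 0 else propagator μ2 (m - 1) l) = (π * μ2)⁻¹ * scaledPropagator (m - 1) l := by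
  rcases m with _ | m
  · simp [scaledPropagator, U_neg_one]
  · simp [propagator_eq_scaledPropagator]

theorem kinetic_scaledPropagator (m r : ℕ) :
    2 * scaledPropagator m r - scaledPropagator (m + 1) r - scaledPropagator (m - 1) r
      = if m = r then π else 0 := by
  have hU (x : ℝ) := congrArg (eval x) (two_mul_U_sub_U_add_one_sub_U_sub_one ℝ m)
  simp only [eval_sub, eval_mul, eval_ofNat, eval_X] at hU
  calc 2 * scaledPropagator m r - scaledPropagator (m + 1) r - scaledPropagator (m - 1) r
      = ∫ x, 2 * ((1 + x) * ((U ℝ m).eval x * (U ℝ r).eval x))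
          - (1 + x) * ((U ℝ (m + 1)).eval x * (U ℝ r).eval x)
          - (1 + x) * ((U ℝ (m - 1)).eval x * (U ℝ r).eval x) ∂measureT := by
        simp only [scaledPropagator]
        rw [integral_sub, integral_sub, integral_const_mul] <;>
          exact integrable_measureT (by fun_prop)
    _ = 2 * ∫ x, (1 - x ^ 2) * ((U ℝ m).eval x * (U ℝ r).eval x) ∂measureT := by
        rw [← integral_const_mul]
        congr 1 with x
        linear_combination (1 + x) * (U ℝ r).eval x * hU x
    _ = if m = r then π else 0 := by
        rw [integral_one_sub_sq_mul_U_mul_U_measureT]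
        split_ifs <;> ring

/-- the propagator matrix `P` is an entrywise two-sided inverse of the kinetic
matrix `G_{ml} = μ²(2δ_{ml} − δ_{m,l+1} − δ_{l,m+1})`:
`μ²(2 P_{mr} − P_{m+1,r} − P_{m−1,r}) = δ_{mr}` (with `P_{−1,r} := 0`). -/
theorem propagator_inverse_kinetic (μ2 : ℝ) (hμ2 : 0 < μ2) :
    ∀ m r : ℕ,
      μ2 * (2 * propagator μ2 m r - propagator μ2 (m + 1) r
          - (if m = 0 then 0 else propagator μ2 (m - 1) r))
        = if m = r then 1 else 0 := by
  intro m r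
  calc μ2 * (2 * propagator μ2 m r - propagator μ2 (m + 1) r
          - (if m = 0 then 0 else propagator μ2 (m - 1) r))
      = μ2 * (π * μ2)⁻¹ * (2 * scaledPropagator m r - scaledPropagator (m + 1) r
          - scaledPropagator (m - 1) r) := by
        rw [ite_propagator_pred_eq_scaledPropagator, propagator_eq_scaledPropagator,
          propagator_eq_scaledPropagator]
        push_cast
        ring
    _ = if m = r then 1 else 0 := by
        rw [kinetic_scaledPropagator]
        split_ifs
        · field_simp [hμ2.ne']
        · simp
end
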